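/- arXiv:1407.3070 — 2 statements merged into one kernel-verified Lean document; each statement's English description precedes it below -/
import Mathlib

section
/- Let μ > 0. There exists a four times continuously differentiable function u : [0,1] → ℝ, not identically zero, satisfying u''''(x) = μ² u(x) on [0,1] together with the boundary conditions u(0) = 0, u'(0) = 0, u''(1) = 0 and u'''(1) = u(1), if and only if f(μ) = 0, where f(μ) = μ√μ + μ√μ·cosh(√μ)·cos(√μ) + sin(√μ)·cosh(√μ) − cos(√μ)·sinh(√μ). -/
/-!
With `ω = √μ`, uniqueness for the equivalent first-order linear system shows that every solution
of `u'''' = ω⁴ u` with `u(0) = u'(0) = 0` is a combination `c K₀(ωx) + d K₃(ωx)` of the Krylov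
functions `K₀ = cosh − cos` and `K₃ = sinh − sin`, and conversely every such combination is one.
The two conditions at `x = 1` are then a `2 × 2` linear system in `(c, d)`, which has a nonzero
solution iff its determinant, `2ω²` times the characteristic function, vanishes.
-/

open Real Set Matrix

section DerivativeChain

variable {𝕜 F : Type*} [NontriviallyNormedField 𝕜] [NormedAddCommGroup F] [NormedSpace 𝕜 F]
  {f : ℕ → 𝕜 → F}

theorem contDiff_of_hasDerivAt_chain (hf : ∀ k x, HasDerivAt (f k) (f (k + 1) x) x)
    (n k : ℕ) : ContDiff 𝕜 n (f k) := by
  induction n generalizing k with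
  | zero => exact contDiff_zero.2 (continuous_iff_continuousAt.2 fun x => (hf k x).continuousAt)
  | succ n ih =>
    have hderiv : deriv (f k) = f (k + 1) := funext fun x => (hf k x).deriv
    rw [Nat.cast_add_one, contDiff_succ_iff_deriv, hderiv]
    exact ⟨fun x => (hf k x).differentiableAt, by simp, ih (k + 1)⟩

theorem eqOn_iteratedDerivWithin_of_hasDerivAt_chain
    (hf : ∀ k x, HasDerivAt (f k) (f (k + 1) x) x) {s : Set 𝕜} (hs : UniqueDiffOn 𝕜 s) (k : ℕ) :
    EqOn (iteratedDerivWithin k (f 0) s) (f k) s := by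
  induction k with
  | zero => simp [EqOn]
  | succ k ih =>
    intro x hx
    rw [iteratedDerivWithin_succ, derivWithin_congr ih (ih hx)]
    exact (hf k x).hasDerivWithinAt.derivWithin (hs x hx)

theorem ContDiffOn.hasDerivWithinAt_iteratedDerivWithin {u : 𝕜 → F} {s : Set 𝕜} {n k : ℕ}
    (hu : ContDiffOn 𝕜 n u s) (hs : UniqueDiffOn 𝕜 s) (hk : k < n) {x : 𝕜} (hx : x ∈ s) :
    HasDerivWithinAt (iteratedDerivWithin k u s) (iteratedDerivWithin (k + 1) u s x) s x := by
  rw [iteratedDerivWithin_succ]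
  exact ((hu.differentiableOn_iteratedDerivWithin (mod_cast hk) hs) x hx).hasDerivWithinAt

end DerivativeChain

/-- `u` is the jet `(u 0, u 0', u 0'', u 0''', u 0'''')` on `s` of a solution of `u'''' = m u`. -/
def IsFourthOrderSolution (m : ℝ) (s : Set ℝ) (u : ℕ → ℝ → ℝ) : Prop :=
  (∀ k < 4, ∀ x ∈ s, HasDerivWithinAt (u k) (u (k + 1) x) s x) ∧ ∀ x ∈ s, u 4 x = m * u 0 x

noncomputable def fourthOrderCompanion (m : ℝ) : (ℝ × ℝ × ℝ × ℝ) →L[ℝ] ℝ × ℝ × ℝ × ℝ :=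
  LinearMap.toContinuousLinearMap
    { toFun := fun y => (y.2.1, y.2.2.1, y.2.2.2, m * y.1)
      map_add' := fun y z => by simp only [Prod.fst_add, Prod.snd_add, mul_add, Prod.mk_add_mk]
      map_smul' := fun c y => by
        simp only [Prod.smul_fst, Prod.smul_snd, smul_eq_mul, RingHom.id_apply, Prod.smul_mk]
        ring_nf }

namespace IsFourthOrderSolution

variable {m : ℝ} {s : Set ℝ} {u v : ℕ → ℝ → ℝ}

theorem hasDerivWithinAt_jet (hu : IsFourthOrderSolution m s u) {x : ℝ} (hx : x ∈ s) :
    HasDerivWithinAt (fun t => (u 0 t, u 1 t, u 2 t, u 3 t))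
      (fourthOrderCompanion m (u 0 x, u 1 x, u 2 x, u 3 x)) s x := by
  have hd := fun k (hk : k < 4) => hu.1 k hk x hx
  have h3 := hd 3 (by norm_num)
  rw [hu.2 x hx] at h3
  exact (hd 0 (by norm_num)).prodMk <| (hd 1 (by norm_num)).prodMk <| (hd 2 (by norm_num)).prodMk h3

theorem eqOn {a b : ℝ} (hu : IsFourthOrderSolution m (Icc a b) u)
    (hv : IsFourthOrderSolution m (Icc a b) v) (ha : ∀ k < 4, u k a = v k a) :
    ∀ k < 4, EqOn (u k) (v k) (Icc a b) := by
  have hjet := ODE_solution_unique (fun _ => (fourthOrderCompanion m).lipschitz)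
    (fun x hx => (hu.hasDerivWithinAt_jet hx).continuousWithinAt)
    (fun x hx => (hu.hasDerivWithinAt_jet (Ico_subset_Icc_self hx)).mono_of_mem_nhdsWithin
      (Icc_mem_nhdsGE_of_mem hx))
    (fun x hx => (hv.hasDerivWithinAt_jet hx).continuousWithinAt)
    (fun x hx => (hv.hasDerivWithinAt_jet (Ico_subset_Icc_self hx)).mono_of_mem_nhdsWithin
      (Icc_mem_nhdsGE_of_mem hx))
    (by simp only [ha 0 (by norm_num), ha 1 (by norm_num), ha 2 (by norm_num), ha 3 (by norm_num)])
  intro k hk x hx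
  have := hjet hx
  simp only [Prod.mk.injEq] at this
  interval_cases k <;> tauto

end IsFourthOrderSolution

/-- Twice the Krylov functions of the beam equation, indexed modulo `4` in the order of
differentiation. -/
noncomputable def krylov (ω : ℝ) (n : ℕ) (x : ℝ) : ℝ :=
  match n % 4 with
  | 0 => cosh (ω * x) - cos (ω * x)
  | 1 => sinh (ω * x) + sin (ω * x)
  | 2 => cosh (ω * x) + cos (ω * x)
  | _ => sinh (ω * x) - sin (ω * x)

theorem krylov_add_four (ω : ℝ) (n : ℕ) : krylov ω (n + 4) = krylov ω n := by
  funext x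
  unfold krylov
  rw [Nat.add_mod_right]

theorem hasDerivAt_krylov (ω : ℝ) (n : ℕ) (x : ℝ) :
    HasDerivAt (krylov ω n) (ω * krylov ω (n + 1) x) x := by
  have hlin : HasDerivAt (fun y => ω * y) ω x := by simpa using (hasDerivAt_id x).const_mul ω
  have hsucc : (n + 1) % 4 = (n % 4 + 1) % 4 := Nat.add_mod _ _ _
  have hlt : n % 4 < 4 := Nat.mod_lt n (by norm_num)
  unfold krylov
  rw [hsucc]
  interval_cases n % 4
  · exact (hlin.cosh.sub hlin.cos).congr_deriv (by norm_num; ring)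
  · exact (hlin.sinh.add hlin.sin).congr_deriv (by norm_num; ring)
  · exact (hlin.cosh.add hlin.cos).congr_deriv (by norm_num; ring)
  · exact (hlin.sinh.sub hlin.sin).congr_deriv (by norm_num; ring)

theorem ContDiffOn.isFourthOrderSolution {m : ℝ} {s : Set ℝ} {u : ℝ → ℝ}
    (hu : ContDiffOn ℝ 4 u s) (hs : UniqueDiffOn ℝ s)
    (hode : ∀ x ∈ s, iteratedDerivWithin 4 u s x = m * u x) :
    IsFourthOrderSolution m s (fun k => iteratedDerivWithin k u s) :=
  ⟨fun _ hk _ hx => hu.hasDerivWithinAt_iteratedDerivWithin hs (mod_cast hk) hx,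
    fun x hx => by simpa using hode x hx⟩

/-- `beamMode ω c d k` is the `k`-th derivative of `c • krylov ω 0 + d • krylov ω 3`, the general
solution of `u'''' = ω⁴ u` with `u 0 = u' 0 = 0`. -/
noncomputable def beamMode (ω c d : ℝ) (k : ℕ) (x : ℝ) : ℝ :=
  ω ^ k * (c * krylov ω k x + d * krylov ω (k + 3) x)

theorem hasDerivAt_beamMode (ω c d : ℝ) (k : ℕ) (x : ℝ) :
    HasDerivAt (beamMode ω c d k) (beamMode ω c d (k + 1) x) x := by
  have h := (((hasDerivAt_krylov ω k x).const_mul c).add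
    ((hasDerivAt_krylov ω (k + 3) x).const_mul d)).const_mul (ω ^ k)
  refine h.congr_deriv ?_
  rw [beamMode, show k + 3 + 1 = k + 1 + 3 by ring]
  ring

theorem isFourthOrderSolution_beamMode (ω c d : ℝ) (s : Set ℝ) :
    IsFourthOrderSolution (ω ^ 4) s (beamMode ω c d) :=
  ⟨fun k _ x _ => (hasDerivAt_beamMode ω c d k x).hasDerivWithinAt,
    fun x _ => by simp only [beamMode, krylov_add_four ω 0, krylov_add_four ω 3, pow_zero, one_mul]⟩

theorem beamMode_initial (ω c d : ℝ) :
    beamMode ω c d 0 0 = 0 ∧ beamMode ω c d 1 0 = 0 ∧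
      beamMode ω c d 2 0 = 2 * ω ^ 2 * c ∧ beamMode ω c d 3 0 = 2 * ω ^ 3 * d := by
  simp [beamMode, krylov]
  constructor <;> ring

theorem exists_eqOn_beamMode {ω b : ℝ} (hω : ω ≠ 0) (hb : 0 < b) {u : ℝ → ℝ}
    (hu : ContDiffOn ℝ 4 u (Icc 0 b))
    (hode : ∀ x ∈ Icc 0 b, iteratedDerivWithin 4 u (Icc 0 b) x = ω ^ 4 * u x)
    (h0 : u 0 = 0) (h0' : derivWithin u (Icc 0 b) 0 = 0) :
    ∃ c d, ∀ k < 4, EqOn (iteratedDerivWithin k u (Icc 0 b)) (beamMode ω c d k) (Icc 0 b) := by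
  obtain ⟨c, hc⟩ : ∃ c, 2 * ω ^ 2 * c = iteratedDerivWithin 2 u (Icc 0 b) 0 :=
    ⟨_, mul_div_cancel₀ _ (by positivity)⟩
  obtain ⟨d, hd⟩ : ∃ d, 2 * ω ^ 3 * d = iteratedDerivWithin 3 u (Icc 0 b) 0 :=
    ⟨_, mul_div_cancel₀ _ (by positivity)⟩
  refine ⟨c, d, (hu.isFourthOrderSolution (uniqueDiffOn_Icc hb) hode).eqOn
    (isFourthOrderSolution_beamMode ω c d _) fun k hk => ?_⟩
  obtain ⟨e0, e1, e2, e3⟩ := beamMode_initial ω c d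
  interval_cases k
  · simp [h0, e0]
  · simp [iteratedDerivWithin_one, h0', e1]
  · exact e2 ▸ hc.symm
  · exact e3 ▸ hd.symm

theorem eq_zero_of_eqOn_beamMode_zero {ω b c d : ℝ} (hω : ω ≠ 0) (hb : 0 < b)
    (h : EqOn (beamMode ω c d 0) 0 (Icc 0 b)) : c = 0 ∧ d = 0 := by
  have h0 : (0 : ℝ) ∈ Icc 0 b := left_mem_Icc.2 hb.le
  have hk : ∀ k, beamMode ω c d k 0 = 0 := fun k => by
    rw [← eqOn_iteratedDerivWithin_of_hasDerivAt_chain (hasDerivAt_beamMode ω c d)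
      (uniqueDiffOn_Icc hb) k h0, iteratedDerivWithin_congr h h0]
    simp [Pi.zero_def]
  obtain ⟨-, -, e2, e3⟩ := beamMode_initial ω c d
  have h2 : 2 * ω ^ 2 * c = 0 := e2 ▸ hk 2
  have h3 : 2 * ω ^ 3 * d = 0 := e3 ▸ hk 3
  exact ⟨by simpa [hω] using h2, by simpa [hω] using h3⟩

noncomputable def beamMatrix (ω : ℝ) : Matrix (Fin 2) (Fin 2) ℝ :=
  !![ω ^ 2 * krylov ω 2 1, ω ^ 2 * krylov ω 1 1;
    ω ^ 3 * krylov ω 3 1 - krylov ω 0 1, ω ^ 3 * krylov ω 2 1 - krylov ω 3 1]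

theorem beamMatrix_mulVec_eq_zero_iff (ω c d : ℝ) :
    beamMatrix ω *ᵥ ![c, d] = 0 ↔
      beamMode ω c d 2 1 = 0 ∧ beamMode ω c d 3 1 = beamMode ω c d 0 1 := by
  have hmulVec : beamMatrix ω *ᵥ ![c, d] =
      ![beamMode ω c d 2 1, beamMode ω c d 3 1 - beamMode ω c d 0 1] := by
    ext i
    fin_cases i <;> simp [beamMatrix, beamMode, krylov] <;> ring
  rw [hmulVec, ← sub_eq_zero (a := beamMode ω c d 3 1)]
  simp

theorem det_beamMatrix (ω : ℝ) :
    (beamMatrix ω).det =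
      2 * ω ^ 2 * (ω ^ 3 + ω ^ 3 * cosh ω * cos ω + sin ω * cosh ω - cos ω * sinh ω) := by
  simp only [beamMatrix, det_fin_two_of, krylov, Nat.reduceMod, mul_one]
  linear_combination ω ^ 5 * cosh_sq_sub_sinh_sq ω + ω ^ 5 * sin_sq_add_cos_sq ω

theorem exists_beam_solution_iff {ω : ℝ} (hω : ω ≠ 0) :
    (∃ u : ℝ → ℝ,
      ContDiffOn ℝ 4 u (Icc 0 1) ∧
      (∃ x ∈ Icc (0:ℝ) 1, u x ≠ 0) ∧
      (∀ x ∈ Icc (0:ℝ) 1, iteratedDerivWithin 4 u (Icc 0 1) x = ω ^ 4 * u x) ∧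
      u 0 = 0 ∧
      derivWithin u (Icc 0 1) 0 = 0 ∧
      iteratedDerivWithin 2 u (Icc 0 1) 1 = 0 ∧
      iteratedDerivWithin 3 u (Icc 0 1) 1 = u 1) ↔
    ∃ v ≠ 0, beamMatrix ω *ᵥ v = 0 := by
  have hs : UniqueDiffOn ℝ (Icc (0:ℝ) 1) := uniqueDiffOn_Icc one_pos
  have h0 : (0:ℝ) ∈ Icc (0:ℝ) 1 := left_mem_Icc.2 zero_le_one
  have h1 : (1:ℝ) ∈ Icc (0:ℝ) 1 := right_mem_Icc.2 zero_le_one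
  constructor
  · rintro ⟨u, hu, ⟨x₀, hx₀, hux₀⟩, hode, hu0, hu0', hu1'', hu1'''⟩
    obtain ⟨c, d, hcd⟩ := exists_eqOn_beamMode hω one_pos hu hode hu0 hu0'
    have hbc : ∀ k < 4, iteratedDerivWithin k u (Icc 0 1) 1 = beamMode ω c d k 1 :=
      fun k hk => hcd k hk h1
    refine ⟨![c, d], fun hv => hux₀ ?_, ?_⟩
    · have hc : c = 0 := congrFun hv 0
      have hd : d = 0 := congrFun hv 1
      simpa [hc, hd, beamMode] using hcd 0 (by norm_num) hx₀
    · rw [beamMatrix_mulVec_eq_zero_iff, ← hbc 2 (by norm_num), ← hbc 3 (by norm_num),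
        ← hbc 0 (by norm_num)]
      simpa using ⟨hu1'', hu1'''⟩
  · rintro ⟨v, hv, hker⟩
    obtain ⟨c, d, rfl⟩ : ∃ c d, v = ![c, d] := ⟨v 0, v 1, by ext i; fin_cases i <;> rfl⟩
    obtain ⟨hbc2, hbc3⟩ := (beamMatrix_mulVec_eq_zero_iff ω c d).1 hker
    have hderiv := eqOn_iteratedDerivWithin_of_hasDerivAt_chain (hasDerivAt_beamMode ω c d) hs
    refine ⟨beamMode ω c d 0,
      (contDiff_of_hasDerivAt_chain (hasDerivAt_beamMode ω c d) 4 0).contDiffOn, ?_,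
      fun x hx => ?_, (beamMode_initial ω c d).1, ?_, ?_, ?_⟩
    · by_contra! hzero
      obtain ⟨rfl, rfl⟩ := eq_zero_of_eqOn_beamMode_zero hω one_pos hzero
      exact hv (by simp)
    · rw [hderiv 4 hx]
      exact (isFourthOrderSolution_beamMode ω c d _).2 x hx
    · rw [← iteratedDerivWithin_one, hderiv 1 h0]
      exact (beamMode_initial ω c d).2.1
    · rw [hderiv 2 h1, hbc2]
    · rw [hderiv 3 h1, hbc3]

/-- Characteristic equation for the eigenvalues of the conservative beam system with
dynamical boundary control: for `μ > 0`, a nonzero solution of `u'''' = μ² u` on `[0,1]`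
with `u(0) = u'(0) = 0`, `u''(1) = 0` and `u'''(1) = u(1)` exists iff
`f(μ) = μ√μ + μ√μ cosh(√μ) cos(√μ) + sin(√μ) cosh(√μ) − cos(√μ) sinh(√μ) = 0`. -/
theorem beam_characteristic_equation (μ : ℝ) (hμ : 0 < μ) :
    (∃ u : ℝ → ℝ,
      ContDiffOn ℝ 4 u (Icc 0 1) ∧
      (∃ x ∈ Icc (0:ℝ) 1, u x ≠ 0) ∧
      (∀ x ∈ Icc (0:ℝ) 1, iteratedDerivWithin 4 u (Icc 0 1) x = μ ^ 2 * u x) ∧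
      u 0 = 0 ∧
      derivWithin u (Icc 0 1) 0 = 0 ∧
      iteratedDerivWithin 2 u (Icc 0 1) 1 = 0 ∧
      iteratedDerivWithin 3 u (Icc 0 1) 1 = u 1) ↔
    μ * Real.sqrt μ
      + μ * Real.sqrt μ * Real.cosh (Real.sqrt μ) * Real.cos (Real.sqrt μ)
      + Real.sin (Real.sqrt μ) * Real.cosh (Real.sqrt μ)
      - Real.cos (Real.sqrt μ) * Real.sinh (Real.sqrt μ) = 0 := by
  have hω : 0 < √μ := sqrt_pos.2 hμ
  have hμ2 : μ ^ 2 = √μ ^ 4 := by rw [show 4 = 2 * 2 by rfl, pow_mul, sq_sqrt hμ.le]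
  have hμ3 : μ * √μ = √μ ^ 3 := by rw [pow_succ, sq_sqrt hμ.le]
  rw [hμ2, exists_beam_solution_iff hω.ne', exists_mulVec_eq_zero_iff, det_beamMatrix, hμ3]
  simp [hω.ne']
end

section
/- There exist k₀ ∈ ℕ, a constant C > 0 and a sequence of negative real numbers (ν_k)_{k≥k₀} such that for every integer k ≥ k₀, k⁴π⁴ − (ν_k² − ν_k)·k²π² + ν_k − ν_k³ = 0 and |ν_k + k²π²| ≤ C/k²; that is, ν_k = −k²π² + O(1/k²) as k → ∞. -/
open Real

/-
With `a = k²π²` the equation reads `P a ν = 0` for the cubic `P a x = a² − (x² − x)a + x − x³`.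
Since `P a (−a) = −a < 0` while `P a (−a − 2/a) = ((a − 1)² + 5)/a + 8/a³ > 0`, the intermediate
value theorem gives a root in `[−a − 2/a, −a]`; and `2/a = (2/π²)/k²`.
-/

def dispersion (a x : ℝ) : ℝ := a ^ 2 - (x ^ 2 - x) * a + (x - x ^ 3)

lemma continuous_dispersion (a : ℝ) : Continuous (dispersion a) := by
  unfold dispersion; fun_prop

lemma dispersion_neg_self (a : ℝ) : dispersion a (-a) = -a := by
  unfold dispersion; ring

lemma dispersion_neg_self_sub {a : ℝ} (ha : 0 < a) :
    dispersion a (-a - 2 / a) = ((a - 1) ^ 2 + 5) / a + 8 / a ^ 3 := by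
  unfold dispersion; field_simp; ring

lemma exists_dispersion_root_mem_Icc {a : ℝ} (ha : 0 < a) :
    ∃ x ∈ Set.Icc (-a - 2 / a) (-a), dispersion a x = 0 := by
  have hle : -a - 2 / a ≤ -a := by linarith [div_pos two_pos ha]
  have hzero : (0 : ℝ) ∈ Set.Icc (dispersion a (-a)) (dispersion a (-a - 2 / a)) := by
    rw [dispersion_neg_self, dispersion_neg_self_sub ha]
    constructor
    · linarith
    · positivity
  exact intermediate_value_Icc' hle (continuous_dispersion a).continuousOn hzero

lemma exists_neg_dispersion_root_near {a : ℝ} (ha : 0 < a) :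
    ∃ x, x < 0 ∧ dispersion a x = 0 ∧ |x + a| ≤ 2 / a := by
  obtain ⟨x, ⟨hlo, hhi⟩, hx⟩ := exists_dispersion_root_mem_Icc ha
  refine ⟨x, by linarith, hx, abs_le.2 ⟨by linarith, by linarith [div_pos two_pos ha]⟩⟩

/-- Second branch of eigenvalues of the conservative wave–Schrödinger coupled operator:
there are negative `ν_k` with `k⁴π⁴ − (ν_k² − ν_k)k²π² + ν_k − ν_k³ = 0` and
`ν_k = −k²π² + O(1/k²)` as `k → ∞`. -/
theorem wave_schrodinger_second_branch :
    ∃ (k₀ : ℕ) (C : ℝ) (ν : ℕ → ℝ), 0 < C ∧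
      ∀ k : ℕ, k₀ ≤ k →
        ν k < 0 ∧
        (k : ℝ) ^ 4 * π ^ 4 - ((ν k) ^ 2 - ν k) * (k : ℝ) ^ 2 * π ^ 2
          + (ν k - (ν k) ^ 3) = 0 ∧
        |ν k + (k : ℝ) ^ 2 * π ^ 2| ≤ C / (k : ℝ) ^ 2 := by
  have hroot (k : ℕ) : ∃ x : ℝ, 1 ≤ k →
      x < 0 ∧ dispersion (k ^ 2 * π ^ 2) x = 0 ∧ |x + k ^ 2 * π ^ 2| ≤ 2 / (k ^ 2 * π ^ 2) := by
    by_cases hk : 1 ≤ k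
    · have ha : (0 : ℝ) < k ^ 2 * π ^ 2 := by positivity
      exact (exists_neg_dispersion_root_near ha).imp fun _ hx _ => hx
    · exact ⟨0, fun h => absurd h hk⟩
  choose ν hν using hroot
  refine ⟨1, 2 / π ^ 2, ν, by positivity, fun k hk => ?_⟩
  obtain ⟨hneg, hdisp, hnear⟩ := hν k hk
  unfold dispersion at hdisp
  refine ⟨hneg, by linear_combination hdisp, ?_⟩
  rwa [div_div, mul_comm (π ^ 2)]
end
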